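/- arXiv:2311.05978 — 7 statements merged into one kernel-verified Lean document; each statement's English description precedes it below -/
import Mathlib

section
/- Let γ : [a,b) → 𝔻² be a C¹ immersion into the Poincaré disk 𝔻² = {p ∈ ℝ² : |p| < 1} such that |γ(x)| → 1 as x → b. Then the hyperbolic length of γ, namely ∫ₐᵇ (2|∂ₓγ(x)|)/(1 − |γ(x)|²) dx, is infinite. -/
open MeasureTheory Set Filter Topology
open scoped RealInnerProductSpace

/-! The function `-log (1 - ‖γ‖²)` is a primitive of `2 ⟪γ, γ'⟫ / (1 - ‖γ‖²)`, which is bounded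
by the hyperbolic speed `2 ‖γ'‖ / (1 - ‖γ‖²)` because `‖γ‖ < 1`. As `‖γ‖ → 1` this primitive
tends to `+∞`, so the hyperbolic length of `γ` on `[a, c]` is unbounded as `c → b`. -/

theorem sub_le_toReal_lintegral_ofReal_of_hasDerivAt_le {f f' φ : ℝ → ℝ} {a b c : ℝ}
    (hc : c ∈ Ico a b) (hf : ∀ x ∈ Ico a b, HasDerivAt f (f' x) x)
    (hφ : LocallyIntegrableOn φ (Ico a b)) (hle : ∀ x ∈ Ico a b, f' x ≤ φ x)
    (hfin : ∫⁻ x in Ico a b, ENNReal.ofReal (φ x) ≠ ⊤) :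
    f c - f a ≤ (∫⁻ x in Ico a b, ENNReal.ofReal (φ x)).toReal := by
  have hsub : Icc a c ⊆ Ico a b := Icc_subset_Ico_right hc.2
  have hint : IntegrableOn φ (Icc a c) := hφ.integrableOn_compact_subset hsub isCompact_Icc
  calc f c - f a ≤ ∫ x in a..c, φ x :=
        intervalIntegral.sub_le_integral_of_hasDeriv_right_of_le hc.1
          (fun x hx => (hf x (hsub hx)).continuousAt.continuousWithinAt)
          (fun x hx => (hf x (hsub (Ioo_subset_Icc_self hx))).hasDerivWithinAt) hint
          (fun x hx => hle x (hsub (Ioo_subset_Icc_self hx)))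
    _ = ∫ x in Ioc a c, φ x := intervalIntegral.integral_of_le hc.1
    _ ≤ (∫⁻ x in Ioc a c, ENNReal.ofReal (φ x)).toReal := by
        rw [integral_eq_lintegral_pos_part_sub_lintegral_neg_part
          (hint.mono_set Ioc_subset_Icc_self)]
        exact sub_le_self _ ENNReal.toReal_nonneg
    _ ≤ (∫⁻ x in Ico a b, ENNReal.ofReal (φ x)).toReal :=
        ENNReal.toReal_mono hfin (lintegral_mono_set (Ioc_subset_Icc_self.trans hsub))

theorem lintegral_ofReal_Ico_eq_top_of_hasDerivAt_le {f f' φ : ℝ → ℝ} {a b : ℝ} (hab : a < b)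
    (hf : ∀ x ∈ Ico a b, HasDerivAt f (f' x) x)
    (hφ : LocallyIntegrableOn φ (Ico a b)) (hle : ∀ x ∈ Ico a b, f' x ≤ φ x)
    (htop : Tendsto f (𝓝[<] b) atTop) :
    ∫⁻ x in Ico a b, ENNReal.ofReal (φ x) = ⊤ := by
  by_contra hfin
  obtain ⟨c, hc, hlarge⟩ := (Filter.Eventually.and (Ioo_mem_nhdsLT hab)
    (htop.eventually_gt_atTop (f a + (∫⁻ x in Ico a b, ENNReal.ofReal (φ x)).toReal))).exists
  have := sub_le_toReal_lintegral_ofReal_of_hasDerivAt_le (Ioo_subset_Ico_self hc) hf hφ hle hfin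
  linarith

theorem tendsto_neg_log_one_sub_sq_nhdsLT_one :
    Tendsto (fun r : ℝ => -Real.log (1 - r ^ 2)) (𝓝[<] 1) atTop := by
  have hlim : Tendsto (fun r : ℝ => 1 - r ^ 2) (𝓝[<] 1) (𝓝 0) := by
    have : Tendsto (fun r : ℝ => 1 - r ^ 2) (𝓝[<] 1) (𝓝 (1 - 1 ^ 2)) :=
      (tendsto_const_nhds.sub (tendsto_id.pow 2)).mono_left nhdsWithin_le_nhds
    simpa using this
  have hpos : ∀ᶠ r in 𝓝[<] (1 : ℝ), 1 - r ^ 2 ∈ Ioi 0 := by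
    filter_upwards [Ioo_mem_nhdsLT (show (-1 : ℝ) < 1 by norm_num)] with r hr
    simp only [mem_Ioi, sub_pos]
    nlinarith [hr.1, hr.2]
  exact tendsto_neg_atBot_atTop.comp <| Real.tendsto_log_nhdsGT_zero.comp <|
    tendsto_nhdsWithin_of_tendsto_nhds_of_eventually_within _ hlim hpos

section InnerProductSpace

variable {E : Type*} [NormedAddCommGroup E] [InnerProductSpace ℝ E]

theorem HasDerivAt.neg_log_one_sub_norm_sq {γ : ℝ → E} {v : E} {x : ℝ} (hγ : HasDerivAt γ v x)
    (hx : ‖γ x‖ < 1) :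
    HasDerivAt (fun t => -Real.log (1 - ‖γ t‖ ^ 2)) (2 * ⟪γ x, v⟫ / (1 - ‖γ x‖ ^ 2)) x := by
  have hpos : 0 < 1 - ‖γ x‖ ^ 2 := by nlinarith [norm_nonneg (γ x)]
  refine ((hγ.norm_sq.const_sub 1).log hpos.ne').neg.congr_deriv ?_
  ring

theorem two_inner_div_one_sub_norm_sq_le {p v : E} (hp : ‖p‖ < 1) :
    2 * ⟪p, v⟫ / (1 - ‖p‖ ^ 2) ≤ 2 * ‖v‖ / (1 - ‖p‖ ^ 2) := by
  have hpos : 0 < 1 - ‖p‖ ^ 2 := by nlinarith [norm_nonneg p]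
  have : ⟪p, v⟫ ≤ ‖v‖ :=
    (real_inner_le_norm p v).trans (mul_le_of_le_one_left (norm_nonneg v) hp.le)
  gcongr

end InnerProductSpace

theorem hyperbolic_length_infinite_of_approach_boundary_general
    (a b : ℝ) (hab : a < b)
    (γ γ' : ℝ → EuclideanSpace ℝ (Fin 2))
    (hderiv : ∀ x ∈ Ico a b, HasDerivAt γ (γ' x) x)
    (hcont : ContinuousOn γ' (Ico a b))
    (hdisk : ∀ x ∈ Ico a b, ‖γ x‖ < 1)
    (hlim : Tendsto (fun x => ‖γ x‖) (nhdsWithin b (Iio b)) (nhds 1)) :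
    ∫⁻ x in Ico a b, ENNReal.ofReal (2 * ‖γ' x‖ / (1 - ‖γ x‖ ^ 2)) = ⊤ := by
  have hγ : ContinuousOn γ (Ico a b) := fun x hx => (hderiv x hx).continuousAt.continuousWithinAt
  have hdensity : ContinuousOn (fun x => 2 * ‖γ' x‖ / (1 - ‖γ x‖ ^ 2)) (Ico a b) :=
    (continuousOn_const.mul hcont.norm).div (continuousOn_const.sub (hγ.norm.pow 2))
      fun x hx => by nlinarith [hdisk x hx, norm_nonneg (γ x)]
  have hboundary : Tendsto (fun x => ‖γ x‖) (𝓝[<] b) (𝓝[<] 1) :=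
    tendsto_nhdsWithin_of_tendsto_nhds_of_eventually_within _ hlim
      (mem_of_superset (Ioo_mem_nhdsLT hab) fun x hx => hdisk x (Ioo_subset_Ico_self hx))
  exact lintegral_ofReal_Ico_eq_top_of_hasDerivAt_le hab
    (fun x hx => HasDerivAt.neg_log_one_sub_norm_sq (hderiv x hx) (hdisk x hx))
    (hdensity.locallyIntegrableOn measurableSet_Ico)
    (fun x hx => two_inner_div_one_sub_norm_sq_le (hdisk x hx))
    (tendsto_neg_log_one_sub_sq_nhdsLT_one.comp hboundary)

/-- A C¹ immersion into the Poincaré disk whose boundary value approaches the unit circle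
has infinite hyperbolic length. -/
theorem hyperbolic_length_infinite_of_approach_boundary
    (a b : ℝ) (hab : a < b)
    (γ γ' : ℝ → EuclideanSpace ℝ (Fin 2))
    (hderiv : ∀ x ∈ Ico a b, HasDerivAt γ (γ' x) x)
    (hcont : ContinuousOn γ' (Ico a b))
    (himm : ∀ x ∈ Ico a b, γ' x ≠ 0)
    (hdisk : ∀ x ∈ Ico a b, ‖γ x‖ < 1)
    (hlim : Tendsto (fun x => ‖γ x‖) (nhdsWithin b (Iio b)) (nhds 1)) :
    ∫⁻ x in Ico a b, ENNReal.ofReal (2 * ‖γ' x‖ / (1 - ‖γ x‖ ^ 2)) = ⊤ :=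
  hyperbolic_length_infinite_of_approach_boundary_general a b hab γ γ' hderiv hcont hdisk hlim
end

section
/- Let u : I → ℍ² be a smooth immersion into the hyperbolic half-plane, parametrized with Euclidean speed |∂ₓu| ≡ 1 on a compact interval I. Then ∫_I (∂ₓu₁)²/u₂ dx ≤ ℰ(u) + 4, where ℰ(u) = ∫_I κ² ds is the hyperbolic elastic energy with κ the hyperbolic signed curvature given by κ = ∂ₓ²u₂ ∂ₓu₁ u₂ − ∂ₓ²u₁ ∂ₓu₂ u₂ + ∂ₓu₁ (since |∂ₓu| ≡ 1) and ds = (1/u₂) dx the hyperbolic arc-length element. -/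
/-- For a smooth unit-Euclidean-speed immersion u = (u₁,u₂) into the upper half-plane,
∫ (∂ₓu₁)²/u₂ ≤ ℰ(u) + 4, where ℰ(u) = ∫ κ²/u₂ dx with
κ = (u₂''u₁' − u₁''u₂')u₂ + u₁'. -/
theorem energy_estimate_horizontal_derivative
    (a b : ℝ) (hab : a ≤ b) (u1 u2 : ℝ → ℝ)
    (h1 : ContDiff ℝ (⊤ : ℕ∞) u1) (h2 : ContDiff ℝ (⊤ : ℕ∞) u2)
    (hpos : ∀ x ∈ Set.Icc a b, 0 < u2 x)
    (hunit : ∀ x ∈ Set.Icc a b, (deriv u1 x) ^ 2 + (deriv u2 x) ^ 2 = 1) :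
    ∫ x in a..b, (deriv u1 x) ^ 2 / u2 x ≤
      (∫ x in a..b,
        ((deriv (deriv u2) x * deriv u1 x - deriv (deriv u1) x * deriv u2 x) * u2 x
          + deriv u1 x) ^ 2 / u2 x) + 4 := by
  rcases eq_or_lt_of_le hab with rfl | hlt
  · simp
  -- notation
  set f := deriv u1 with hf
  set g := deriv u2 with hg
  -- smoothness facts
  have ha1 : ContDiff ℝ (⊤ : ℕ∞) f := (contDiff_infty_iff_deriv.mp (h1.of_le (by simp))).2
  have ha2 : ContDiff ℝ (⊤ : ℕ∞) g := (contDiff_infty_iff_deriv.mp (h2.of_le (by simp))).2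
  have hd1 : Differentiable ℝ f := (contDiff_infty_iff_deriv.mp ha1).1
  have hd2 : Differentiable ℝ g := (contDiff_infty_iff_deriv.mp ha2).1
  have hcf : Continuous f := hd1.continuous
  have hcg : Continuous g := hd2.continuous
  have hcf' : Continuous (deriv f) := (contDiff_infty_iff_deriv.mp ha1).2.continuous
  have hcg' : Continuous (deriv g) := (contDiff_infty_iff_deriv.mp ha2).2.continuous
  have hcu2 : Continuous u2 := h2.continuous
  -- relation f f' + g g' = 0 on Icc
  have hrel : ∀ x ∈ Set.Icc a b, f x * deriv f x + g x * deriv g x = 0 := by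
    have hIoo : ∀ x ∈ Set.Ioo a b, f x * deriv f x + g x * deriv g x = 0 := by
      intro x hx
      have hmem : Set.Ioo a b ∈ nhds x := isOpen_Ioo.mem_nhds hx
      have heq : (fun y => f y ^ 2 + g y ^ 2) =ᶠ[nhds x] fun _ => (1:ℝ) :=
        Filter.eventually_of_mem hmem fun y hy => hunit y (Set.Ioo_subset_Icc_self hy)
      have hderiv0 : deriv (fun y => f y ^ 2 + g y ^ 2) x = 0 := by
        rw [heq.deriv_eq]; simp
      have hda : HasDerivAt (fun y => f y ^ 2 + g y ^ 2)
          (2 * f x * deriv f x + 2 * g x * deriv g x) x := by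
        have h1' := ((hd1 x).hasDerivAt.pow 2)
        have h2' := ((hd2 x).hasDerivAt.pow 2)
        exact (h1'.add h2').congr_deriv (by simp only [Nat.cast_ofNat, Nat.reduceSub, pow_one])
      have := hda.deriv
      rw [hderiv0] at this
      linarith
    have hcont : Continuous (fun x => f x * deriv f x + g x * deriv g x) :=
      (hcf.mul hcf').add (hcg.mul hcg')
    have hclosure : Set.EqOn (fun x => f x * deriv f x + g x * deriv g x)
        (fun _ => (0:ℝ)) (closure (Set.Ioo a b)) :=
      Set.EqOn.closure (fun x hx => hIoo x hx) hcont continuous_const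
    intro x hx
    have := hclosure (by rwa [closure_Ioo hlt.ne])
    simpa using this
  -- pointwise inequality
  have hpt : ∀ x ∈ Set.Icc a b,
      f x ^ 2 / u2 x + 2 * deriv g x ≤
      ((deriv g x * f x - deriv f x * g x) * u2 x + f x) ^ 2 / u2 x := by
    intro x hx
    have ht := hpos x hx
    have hu := hunit x hx
    have hr := hrel x hx
    have hAf : (deriv g x * f x - deriv f x * g x) * f x = deriv g x := by
      linear_combination deriv g x * hu - g x * hr
    have key : f x ^ 2 + 2 * deriv g x * u2 x ≤
        ((deriv g x * f x - deriv f x * g x) * u2 x + f x) ^ 2 := by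
      nlinarith [sq_nonneg ((deriv g x * f x - deriv f x * g x) * u2 x), hAf, ht.le]
    have : f x ^ 2 / u2 x + 2 * deriv g x
        = (f x ^ 2 + 2 * deriv g x * u2 x) / u2 x := by
      field_simp
    rw [this]
    exact div_le_div_of_nonneg_right key ht.le |>.trans_eq rfl
  -- integrability
  have huIcc : Set.uIcc a b = Set.Icc a b := Set.uIcc_of_le hab
  have hu2ne : ∀ x ∈ Set.uIcc a b, u2 x ≠ 0 := by
    intro x hx; exact (hpos x (huIcc ▸ hx)).ne'
  have hint1 : IntervalIntegrable (fun x => f x ^ 2 / u2 x) MeasureTheory.volume a b := by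
    apply ContinuousOn.intervalIntegrable
    exact ((hcf.pow 2).continuousOn).div hcu2.continuousOn hu2ne
  have hint2 : IntervalIntegrable (fun x =>
      ((deriv g x * f x - deriv f x * g x) * u2 x + f x) ^ 2 / u2 x)
      MeasureTheory.volume a b := by
    apply ContinuousOn.intervalIntegrable
    exact ((((((hcg'.mul hcf).sub (hcf'.mul hcg)).mul hcu2).add hcf).pow 2).continuousOn).div
      hcu2.continuousOn hu2ne
  have hintg' : IntervalIntegrable (fun x => 2 * deriv g x) MeasureTheory.volume a b :=
    (continuous_const.mul hcg').intervalIntegrable a b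
  have hintsum : IntervalIntegrable (fun x => f x ^ 2 / u2 x + 2 * deriv g x)
      MeasureTheory.volume a b := hint1.add hintg'
  -- integral comparison
  have hmono := intervalIntegral.integral_mono_on hab hintsum hint2 hpt
  have hsplit : (∫ x in a..b, (f x ^ 2 / u2 x + 2 * deriv g x)) =
      (∫ x in a..b, f x ^ 2 / u2 x) + 2 * (∫ x in a..b, deriv g x) := by
    rw [intervalIntegral.integral_add hint1 hintg', intervalIntegral.integral_const_mul]
  have hftc : (∫ x in a..b, deriv g x) = g b - g a :=
    intervalIntegral.integral_deriv_eq_sub (fun x _ => hd2 x)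
      (hcg'.intervalIntegrable a b)
  -- bound g values
  have hga : -1 ≤ g a ∧ g a ≤ 1 := by
    have := hunit a (Set.left_mem_Icc.2 hab)
    constructor <;> nlinarith [sq_nonneg (deriv u1 a)]
  have hgb : -1 ≤ g b ∧ g b ≤ 1 := by
    have := hunit b (Set.right_mem_Icc.2 hab)
    constructor <;> nlinarith [sq_nonneg (deriv u1 b)]
  rw [hsplit, hftc] at hmono
  linarith [hga.2, hgb.1]
end

section
/- Let I be a compact interval and u_n : I → ℍ² a sequence of smooth immersions, together with measurable sets E_n ⊆ I, such that: the Euclidean lengths L_{ℝ²}(u_n) are uniformly bounded, ∫_{E_n} |∂ₓu_n⁽¹⁾| dx ≥ ℓ > 0 for all n, and ‖u_n⁽²⁾‖_{L^∞(E_n)} → 0. Then the hyperbolic elastic energies ℰ(u_n) tend to +∞. -/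
/-- Euclidean speed of a curve (u₁,u₂) in the half-plane. -/
noncomputable def hypSpeed (u1 u2 : ℝ → ℝ) (x : ℝ) : ℝ :=
  Real.sqrt ((deriv u1 x) ^ 2 + (deriv u2 x) ^ 2)

/-- Hyperbolic signed curvature of a curve (u₁,u₂) in the half-plane. -/
noncomputable def hypCurv (u1 u2 : ℝ → ℝ) (x : ℝ) : ℝ :=
  (deriv (deriv u2) x * deriv u1 x * u2 x - deriv (deriv u1) x * deriv u2 x * u2 x
    + deriv u1 x * (hypSpeed u1 u2 x) ^ 2) / (hypSpeed u1 u2 x) ^ 3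

/-- Hyperbolic elastic energy ℰ(u) = ∫ κ² ds with ds = |∂ₓu|/u₂ dx. -/
noncomputable def elasticEnergyH (u1 u2 : ℝ → ℝ) (a b : ℝ) : ℝ :=
  ∫ x in a..b, (hypCurv u1 u2 x) ^ 2 * hypSpeed u1 u2 x / u2 x


open MeasureTheory Set
open scoped ContDiff

lemma hasDerivAt_ratio (u1 u2 : ℝ → ℝ) (h1 : ContDiff ℝ (⊤ : ℕ∞) u1) (h2 : ContDiff ℝ (⊤ : ℕ∞) u2)
    {x : ℝ} (hv : 0 < hypSpeed u1 u2 x) :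
    HasDerivAt (fun y => deriv u2 y / hypSpeed u1 u2 y)
      (deriv u1 x * (deriv u1 x * deriv (deriv u2) x - deriv u2 x * deriv (deriv u1) x)
        / hypSpeed u1 u2 x ^ 3) x := by
  have h1' : ContDiff ℝ ∞ (deriv u1) :=
    (contDiff_infty_iff_deriv.mp (h1.of_le (by simp))).2
  have h2' : ContDiff ℝ ∞ (deriv u2) :=
    (contDiff_infty_iff_deriv.mp (h2.of_le (by simp))).2
  have hd1 : HasDerivAt (deriv u1) (deriv (deriv u1) x) x :=
    ((h1'.differentiable (by simp)) x).hasDerivAt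
  have hd2 : HasDerivAt (deriv u2) (deriv (deriv u2) x) x :=
    ((h2'.differentiable (by simp)) x).hasDerivAt
  have hg : HasDerivAt (fun y => deriv u1 y ^ 2 + deriv u2 y ^ 2)
      ((2 : ℕ) * deriv u1 x ^ 1 * deriv (deriv u1) x
        + (2 : ℕ) * deriv u2 x ^ 1 * deriv (deriv u2) x) x :=
    (hd1.pow 2).add (hd2.pow 2)
  have hgx : (0:ℝ) < deriv u1 x ^ 2 + deriv u2 x ^ 2 := by
    by_contra h
    push_neg at h
    have : hypSpeed u1 u2 x = 0 := by
      unfold hypSpeed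
      exact Real.sqrt_eq_zero_of_nonpos h
    linarith [hv, this]
  have hvsq : hypSpeed u1 u2 x ^ 2 = deriv u1 x ^ 2 + deriv u2 x ^ 2 := by
    unfold hypSpeed; exact Real.sq_sqrt hgx.le
  have hvd : HasDerivAt (hypSpeed u1 u2)
      (((2 : ℕ) * deriv u1 x ^ 1 * deriv (deriv u1) x
        + (2 : ℕ) * deriv u2 x ^ 1 * deriv (deriv u2) x)
        / (2 * Real.sqrt (deriv u1 x ^ 2 + deriv u2 x ^ 2))) x := hg.sqrt hgx.ne'
  have hq := hd2.div hvd hv.ne'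
  refine hq.congr_deriv ?_
  symm
  have hvne : hypSpeed u1 u2 x ≠ 0 := hv.ne'
  have hsqrt : Real.sqrt (deriv u1 x ^ 2 + deriv u2 x ^ 2) = hypSpeed u1 u2 x := rfl
  rw [hsqrt]
  field_simp
  ring_nf
  linear_combination (-(2 * deriv (deriv u2) x)) * hvsq

lemma key_ineq (a b : ℝ) (hab : a ≤ b) (u1 u2 : ℝ → ℝ)
    (h1 : ContDiff ℝ (⊤ : ℕ∞) u1) (h2 : ContDiff ℝ (⊤ : ℕ∞) u2)
    (hpos : ∀ x ∈ Icc a b, 0 < u2 x)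
    (himm : ∀ x ∈ Icc a b, 0 < hypSpeed u1 u2 x) :
    ∫ x in a..b, deriv u1 x ^ 2 / (hypSpeed u1 u2 x * u2 x)
      ≤ elasticEnergyH u1 u2 a b + 4 := by
  have h1' : ContDiff ℝ ∞ (deriv u1) :=
    (contDiff_infty_iff_deriv.mp (h1.of_le (by simp))).2
  have h2' : ContDiff ℝ ∞ (deriv u2) :=
    (contDiff_infty_iff_deriv.mp (h2.of_le (by simp))).2
  have hcd1 : Continuous (deriv u1) := h1.continuous_deriv (by simp)
  have hcd2 : Continuous (deriv u2) := h2.continuous_deriv (by simp)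
  have hcdd1 : Continuous (deriv (deriv u1)) :=
    h1'.continuous_deriv (by exact_mod_cast le_top)
  have hcdd2 : Continuous (deriv (deriv u2)) :=
    h2'.continuous_deriv (by exact_mod_cast le_top)
  have hcu2 : Continuous u2 := h2.continuous
  have hcv : Continuous (hypSpeed u1 u2) := by
    unfold hypSpeed
    exact ((hcd1.pow 2).add (hcd2.pow 2)).sqrt
  set V := hypSpeed u1 u2 with hV
  set K := hypCurv u1 u2 with hK
  set Q : ℝ → ℝ := fun x => deriv u1 x ^ 2 / (V x * u2 x) with hQ
  set P : ℝ → ℝ := fun x => K x * deriv u1 x / u2 x with hP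
  set Df : ℝ → ℝ := fun x =>
    deriv u1 x * (deriv u1 x * deriv (deriv u2) x - deriv u2 x * deriv (deriv u1) x)
      / V x ^ 3 with hDf
  set R : ℝ → ℝ := fun x => K x ^ 2 * V x / u2 x with hR
  have huIcc : uIcc a b = Icc a b := uIcc_of_le hab
  -- continuity on Icc
  have hKc : ContinuousOn K (Icc a b) := by
    rw [hK]; unfold hypCurv
    exact ContinuousOn.div
      (((((hcdd2.mul hcd1).mul hcu2).sub ((hcdd1.mul hcd2).mul hcu2)).add
        (hcd1.mul (hcv.pow 2))).continuousOn)
      ((hcv.pow 3).continuousOn)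
      (fun x hx => pow_ne_zero _ (himm x hx).ne')
  have hQc : ContinuousOn Q (Icc a b) :=
    ContinuousOn.div ((hcd1.pow 2).continuousOn) ((hcv.mul hcu2).continuousOn)
      (fun x hx => (mul_pos (himm x hx) (hpos x hx)).ne')
  have hPc : ContinuousOn P (Icc a b) :=
    ContinuousOn.div (hKc.mul hcd1.continuousOn) hcu2.continuousOn
      (fun x hx => (hpos x hx).ne')
  have hDc : ContinuousOn Df (Icc a b) :=
    ContinuousOn.div
      ((hcd1.mul ((hcd1.mul hcdd2).sub (hcd2.mul hcdd1))).continuousOn)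
      ((hcv.pow 3).continuousOn)
      (fun x hx => pow_ne_zero _ (himm x hx).ne')
  have hRc : ContinuousOn R (Icc a b) :=
    ContinuousOn.div ((hKc.pow 2).mul hcv.continuousOn) hcu2.continuousOn
      (fun x hx => (hpos x hx).ne')
  have hQint : IntervalIntegrable Q volume a b :=
    (huIcc ▸ hQc : ContinuousOn Q (uIcc a b)).intervalIntegrable
  have hPint : IntervalIntegrable P volume a b :=
    (huIcc ▸ hPc : ContinuousOn P (uIcc a b)).intervalIntegrable
  have hDint : IntervalIntegrable Df volume a b :=
    (huIcc ▸ hDc : ContinuousOn Df (uIcc a b)).intervalIntegrable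
  have hRint : IntervalIntegrable R volume a b :=
    (huIcc ▸ hRc : ContinuousOn R (uIcc a b)).intervalIntegrable
  -- FTC
  have hftc : ∫ x in a..b, Df x = deriv u2 b / V b - deriv u2 a / V a := by
    apply intervalIntegral.integral_eq_sub_of_hasDerivAt
    · intro x hx
      rw [huIcc] at hx
      exact hasDerivAt_ratio u1 u2 h1 h2 (himm x hx)
    · exact hDint
  -- boundary bound
  have hbd : ∀ x ∈ Icc a b, |deriv u2 x / V x| ≤ 1 := by
    intro x hx
    have hv := himm x hx
    have h2le : |deriv u2 x| ≤ V x := by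
      have h := Real.sqrt_le_sqrt
        (by nlinarith [sq_nonneg (deriv u1 x)] :
          deriv u2 x ^ 2 ≤ deriv u1 x ^ 2 + deriv u2 x ^ 2)
      rwa [Real.sqrt_sq_eq_abs] at h
    rw [abs_div, abs_of_pos hv, div_le_one hv]
    exact h2le
  -- pointwise identity Df = P - Q on Icc
  have hDPQ : EqOn Df (fun x => P x - Q x) (uIcc a b) := by
    rw [huIcc]
    intro x hx
    have hv := himm x hx
    have hu := hpos x hx
    simp only [hDf, hP, hQ, hK]
    unfold hypCurv
    rw [← hV]
    field_simp
    ring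
  -- pointwise P ≤ (R + Q)/2 on Icc
  have hPRQ : ∀ x ∈ Icc a b, P x ≤ (R x + Q x) / 2 := by
    intro x hx
    have hv := himm x hx
    have hu := hpos x hx
    have heq : (R x + Q x) / 2 - P x = (K x * V x - deriv u1 x) ^ 2 / (2 * (V x * u2 x)) := by
      simp only [hR, hQ, hP]
      field_simp
      ring
    nlinarith [heq, div_nonneg (sq_nonneg (K x * V x - deriv u1 x))
      (by positivity : (0:ℝ) ≤ 2 * (V x * u2 x))]
  -- assemble
  have hsplit : ∫ x in a..b, Df x = (∫ x in a..b, P x) - ∫ x in a..b, Q x := by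
    rw [intervalIntegral.integral_congr hDPQ, intervalIntegral.integral_sub hPint hQint]
  have hPle : (∫ x in a..b, P x) ≤ ∫ x in a..b, (R x + Q x) / 2 := by
    apply intervalIntegral.integral_mono_on hab hPint ((hRint.add hQint).div_const 2)
    exact hPRQ
  have hhalf : ∫ x in a..b, (R x + Q x) / 2
      = ((∫ x in a..b, R x) + ∫ x in a..b, Q x) / 2 := by
    rw [intervalIntegral.integral_div, intervalIntegral.integral_add hRint hQint]
  have hE : elasticEnergyH u1 u2 a b = ∫ x in a..b, R x := rfl
  have hba : |deriv u2 b / V b| ≤ 1 := hbd b (right_mem_Icc.mpr hab)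
  have haa : |deriv u2 a / V a| ≤ 1 := hbd a (left_mem_Icc.mpr hab)
  have h1' := abs_le.mp hba
  have h2'' := abs_le.mp haa
  have : (∫ x in a..b, Q x) ≤ (∫ x in a..b, P x) + 2 := by
    have := hftc
    rw [hsplit] at this
    linarith [h1'.1, h1'.2, h2''.1, h2''.2]
  rw [hE]
  linarith [hPle, hhalf ▸ hPle]


/-- If uₙ : [a,b] → ℍ² are smooth immersions with uniformly bounded Euclidean lengths,
∫_{Eₙ}|∂ₓuₙ⁽¹⁾| ≥ ℓ > 0 and ‖uₙ⁽²⁾‖_{L^∞(Eₙ)} → 0, then ℰ(uₙ) → ∞. -/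
theorem elastic_energy_blowup
    (a b : ℝ) (hab : a < b) (u1 u2 : ℕ → ℝ → ℝ) (E : ℕ → Set ℝ)
    (hEmeas : ∀ n, MeasurableSet (E n)) (hEsub : ∀ n, E n ⊆ Set.Icc a b)
    (hsm1 : ∀ n, ContDiff ℝ (⊤ : ℕ∞) (u1 n)) (hsm2 : ∀ n, ContDiff ℝ (⊤ : ℕ∞) (u2 n))
    (hpos : ∀ n, ∀ x ∈ Set.Icc a b, 0 < u2 n x)
    (himm : ∀ n, ∀ x ∈ Set.Icc a b, 0 < hypSpeed (u1 n) (u2 n) x)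
    (L : ℝ) (hL : ∀ n, ∫ x in a..b, hypSpeed (u1 n) (u2 n) x ≤ L)
    (ℓ : ℝ) (hℓ : 0 < ℓ)
    (hlow : ∀ n, ℓ ≤ ∫ x in E n, |deriv (u1 n) x|)
    (ε : ℕ → ℝ) (hεlim : Filter.Tendsto ε Filter.atTop (nhds 0))
    (hsup : ∀ n, ∀ x ∈ E n, u2 n x ≤ ε n) :
    Filter.Tendsto (fun n => elasticEnergyH (u1 n) (u2 n) a b)
      Filter.atTop Filter.atTop := by
  have hab' : a ≤ b := hab.le
  have hεpos : ∀ n, 0 < ε n := by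
    intro n
    by_contra h
    push_neg at h
    have hE : E n = ∅ := by
      ext x
      simp only [Set.mem_empty_iff_false, iff_false]
      intro hx
      have h1 := hpos n x (hEsub n hx)
      have h2 := hsup n x hx
      linarith
    have hl := hlow n
    rw [hE] at hl
    simp at hl
    linarith
  rw [Filter.tendsto_atTop]
  intro M
  set t : ℝ := ℓ / (|M| + 5) with ht
  have ht0 : 0 < t := by positivity
  clear_value t
  have hev : ∀ᶠ n in Filter.atTop, ε n * L < t ^ 2 := by
    have h : Filter.Tendsto (fun n => ε n * L) Filter.atTop (nhds 0) := by
      simpa using hεlim.mul_const L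
    exact h.eventually_lt_const (by positivity)
  filter_upwards [hev] with n hn
  -- notation
  set V : ℝ → ℝ := hypSpeed (u1 n) (u2 n) with hV
  set Q : ℝ → ℝ := fun x => deriv (u1 n) x ^ 2 / (V x * u2 n x) with hQdef
  -- continuity
  have hcd1 : Continuous (deriv (u1 n)) := (hsm1 n).continuous_deriv (by simp)
  have hcd2 : Continuous (deriv (u2 n)) := (hsm2 n).continuous_deriv (by simp)
  have hcu2 : Continuous (u2 n) := (hsm2 n).continuous
  have hcv : Continuous V := by
    rw [hV]; unfold hypSpeed
    exact ((hcd1.pow 2).add (hcd2.pow 2)).sqrt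
  have hQc : ContinuousOn Q (Icc a b) :=
    ContinuousOn.div ((hcd1.pow 2).continuousOn) ((hcv.mul hcu2).continuousOn)
      (fun x hx => (mul_pos (himm n x hx) (hpos n x hx)).ne')
  have hQintIcc : IntegrableOn Q (Icc a b) volume := hQc.integrableOn_Icc
  have hVU2intIcc : IntegrableOn (fun x => V x * u2 n x) (Icc a b) volume :=
    (hcv.mul hcu2).continuousOn.integrableOn_Icc
  have hVintIcc : IntegrableOn V (Icc a b) volume := hcv.continuousOn.integrableOn_Icc
  have hQintE : IntegrableOn Q (E n) volume := hQintIcc.mono_set (hEsub n)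
  have hVU2intE : IntegrableOn (fun x => V x * u2 n x) (E n) volume :=
    hVU2intIcc.mono_set (hEsub n)
  have hVintE : IntegrableOn V (E n) volume := hVintIcc.mono_set (hEsub n)
  have habsintE : IntegrableOn (fun x => |deriv (u1 n) x|) (E n) volume :=
    (hcd1.abs.continuousOn.integrableOn_Icc).mono_set (hEsub n)
  -- key inequality
  have hQ4 : ∫ x in a..b, Q x ≤ elasticEnergyH (u1 n) (u2 n) a b + 4 :=
    key_ineq a b hab' (u1 n) (u2 n) (hsm1 n) (hsm2 n) (hpos n) (himm n)
  -- pointwise AM-GM on E n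
  have hpw : ∀ x ∈ E n, |deriv (u1 n) x|
      ≤ (t / 2) * Q x + (1 / (2 * t)) * (V x * u2 n x) := by
    intro x hx
    have hx' := hEsub n hx
    have hv := himm n x hx'
    have hu := hpos n x hx'
    have habs : |deriv (u1 n) x| ^ 2 = deriv (u1 n) x ^ 2 := sq_abs _
    have heq : (t / 2) * Q x + (1 / (2 * t)) * (V x * u2 n x) - |deriv (u1 n) x|
        = (t * |deriv (u1 n) x| - V x * u2 n x) ^ 2 / (2 * t * (V x * u2 n x)) := by
      simp only [hQdef]
      rw [← sq_abs (deriv (u1 n) x)]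
      have hv' : V x ≠ 0 := hv.ne'
      field_simp
      ring_nf
    nlinarith [heq, div_nonneg (sq_nonneg (t * |deriv (u1 n) x| - V x * u2 n x))
      (by positivity : (0:ℝ) ≤ 2 * t * (V x * u2 n x))]
  -- chain of integral inequalities
  have step1 : ℓ ≤ ∫ x in E n, ((t / 2) * Q x + (1 / (2 * t)) * (V x * u2 n x)) := by
    refine le_trans (hlow n) ?_
    exact setIntegral_mono_on habsintE
      ((hQintE.const_mul _).add (hVU2intE.const_mul _)) (hEmeas n) hpw
  have step2 : ∫ x in E n, ((t / 2) * Q x + (1 / (2 * t)) * (V x * u2 n x))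
      = (t / 2) * (∫ x in E n, Q x) + (1 / (2 * t)) * ∫ x in E n, V x * u2 n x := by
    rw [integral_add (hQintE.const_mul _) (hVU2intE.const_mul _),
      integral_const_mul, integral_const_mul]
  have hQE : ∫ x in E n, Q x ≤ ∫ x in Icc a b, Q x := by
    apply setIntegral_mono_set hQintIcc
    · rw [Filter.EventuallyLE, ae_restrict_iff' measurableSet_Icc]
      filter_upwards with x hx
      have hv := himm n x hx
      have hu := hpos n x hx
      simp only [hQdef, Pi.zero_apply]
      positivity
    · exact (hEsub n).eventuallyLE
  have hQIcc : ∫ x in Icc a b, Q x = ∫ x in a..b, Q x := by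
    rw [integral_Icc_eq_integral_Ioc, ← intervalIntegral.integral_of_le hab']
  have hVE1 : ∫ x in E n, V x * u2 n x ≤ ∫ x in E n, ε n * V x := by
    apply setIntegral_mono_on hVU2intE (hVintE.const_mul _) (hEmeas n)
    intro x hx
    have hvnn : 0 ≤ V x := Real.sqrt_nonneg _
    have := hsup n x hx
    nlinarith
  have hVE2 : ∫ x in E n, ε n * V x ≤ ε n * L := by
    rw [integral_const_mul]
    have hVmono : ∫ x in E n, V x ≤ ∫ x in Icc a b, V x := by
      apply setIntegral_mono_set hVintIcc
      · filter_upwards with x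
        exact Real.sqrt_nonneg _
      · exact (hEsub n).eventuallyLE
    have hVL : ∫ x in Icc a b, V x ≤ L := by
      rw [integral_Icc_eq_integral_Ioc, ← intervalIntegral.integral_of_le hab']
      exact hL n
    exact mul_le_mul_of_nonneg_left (hVmono.trans hVL) (hεpos n).le
  -- combine
  set En : ℝ := elasticEnergyH (u1 n) (u2 n) a b with hEn
  have hchain : ℓ ≤ (t / 2) * (En + 4) + (1 / (2 * t)) * (ε n * L) := by
    have h1 : ∫ x in E n, Q x ≤ En + 4 := by
      calc ∫ x in E n, Q x ≤ ∫ x in Icc a b, Q x := hQE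
        _ = ∫ x in a..b, Q x := hQIcc
        _ ≤ En + 4 := hQ4
    have h2 : ∫ x in E n, V x * u2 n x ≤ ε n * L := hVE1.trans hVE2
    calc ℓ ≤ (t / 2) * (∫ x in E n, Q x) + (1 / (2 * t)) * ∫ x in E n, V x * u2 n x := by
          rw [← step2]; exact step1
      _ ≤ (t / 2) * (En + 4) + (1 / (2 * t)) * (ε n * L) := by
          have ht2 : (0:ℝ) < 1 / (2 * t) := by positivity
          gcongr
  have hmul : 2 * t * ℓ ≤ t ^ 2 * (En + 4) + ε n * L := by
    have h := mul_le_mul_of_nonneg_left hchain (by positivity : (0:ℝ) ≤ 2 * t)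
    have heq2 : 2 * t * ((t / 2) * (En + 4) + (1 / (2 * t)) * (ε n * L))
        = t ^ 2 * (En + 4) + ε n * L := by
      field_simp
    linarith [heq2 ▸ h]
  have hℓt : ℓ = t * (|M| + 5) := by
    rw [ht]
    field_simp
  nlinarith [hmul, hn, mul_pos ht0 ht0, le_abs_self M, ht0, hℓt, sq_nonneg t]
end

section
/- Define γ : ℝ → ℝ² by γ(x) = (2x, 1 − x² − cosh²(x)) / (1 + x² + cosh(x)(2 + cosh(x))). Then γ(x) lies in the open unit disk 𝔻² for every x ∈ ℝ, and γ has finite Euclidean length, i.e. ∫_ℝ |γ'(x)| dx < ∞. -/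
/-!
In complex coordinates `γ(x) = 2 / w(x) - i` with `w(x) = x - (1 + cosh x) i`. The map
`w ↦ 2 / w - i` sends the half-plane `Im w < -1` into the unit disk, which gives `‖γ‖ < 1`, and
`|γ'| = 2 |w'| / |w|² = 2 cosh x / (x² + (1 + cosh x)²)` because `|w'| = |1 - i sinh x| = cosh x`.
Since `x² ≤ 4 cosh x`, this speed is at most `8 / (1 + x²)`, which is integrable.
-/

open Complex MeasureTheory

theorem LinearIsometryEquiv.norm_deriv_comp {𝕜 E F : Type*} [NontriviallyNormedField 𝕜]
    [NormedAddCommGroup E] [NormedSpace 𝕜 E] [NormedAddCommGroup F] [NormedSpace 𝕜 F]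
    (L : E ≃ₗᵢ[𝕜] F) (f : 𝕜 → E) (x : 𝕜) : ‖deriv (L ∘ f) x‖ = ‖deriv f x‖ := by
  have h := L.toContinuousLinearEquiv.comp_fderiv (f := f) (x := x)
  rw [← L.norm_map, deriv, deriv]
  exact congrArg (fun T : 𝕜 →L[𝕜] F => ‖T 1‖) h

theorem Real.sq_le_four_mul_cosh (x : ℝ) : x ^ 2 ≤ 4 * Real.cosh x := by
  rw [← Real.cosh_abs, ← sq_abs, Real.cosh_eq]
  nlinarith [Real.quadratic_le_exp_of_nonneg (abs_nonneg x), Real.exp_pos (-|x|), abs_nonneg x]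

theorem Complex.norm_one_sub_sinh_mul_I (x : ℝ) : ‖1 - Real.sinh x * I‖ = Real.cosh x := by
  rw [show (1 : ℂ) - Real.sinh x * I = (1 : ℝ) + (-Real.sinh x : ℝ) * I by push_cast; ring,
    norm_add_mul_I, neg_sq, one_pow, ← Real.cosh_sq', Real.sqrt_sq (Real.cosh_pos x).le]

theorem Complex.norm_two_div_sub_I_lt_one {w : ℂ} (hw : w.im < -1) : ‖2 / w - I‖ < 1 := by
  have hw0 : w ≠ 0 := fun h => by
    simp only [h, zero_im] at hw
    linarith
  have hnorm : ‖2 / w - I‖ = ‖2 - I * w‖ / ‖w‖ := by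
    rw [← norm_div]
    congr 1
    field_simp
  rw [hnorm, div_lt_one (norm_pos_iff.mpr hw0), ← sq_lt_sq₀ (norm_nonneg _) (norm_nonneg _),
    Complex.sq_norm, Complex.sq_norm, normSq_apply, normSq_apply]
  simp only [sub_re, re_ofNat, mul_re, I_re, zero_mul, I_im, one_mul, zero_sub, sub_neg_eq_add,
    sub_im, im_ofNat, mul_im, zero_add]
  nlinarith

theorem Complex.two_div_sub_I_eq (x a : ℝ) (ha : 1 + a ≠ 0) :
    2 / ((x : ℂ) - (1 + a) * I) - I =
      (1 + x ^ 2 + a * (2 + a))⁻¹ • (((2 * x : ℝ) : ℂ) + ((1 - x ^ 2 - a ^ 2 : ℝ) : ℂ) * I) := by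
  have hD : ((1 + x ^ 2 + a * (2 + a) : ℝ) : ℂ) ≠ 0 := by
    exact_mod_cast (by nlinarith [sq_nonneg x, sq_pos_of_ne_zero ha] : 1 + x ^ 2 + a * (2 + a) ≠ 0)
  have hw : (x : ℂ) - (1 + a) * I ≠ 0 := fun h => ha (by simpa [add_comm] using congrArg (- im ·) h)
  rw [div_sub' hw, Complex.real_smul, ofReal_inv, inv_mul_eq_div, div_eq_div_iff hw hD]
  push_cast
  linear_combination (1 + (a : ℂ)) * (2 + 2 * a) * I_sq

theorem Complex.orthonormalBasisOneI_repr_add_mul_I (a b : ℝ) :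
    orthonormalBasisOneI.repr (a + b * I) = WithLp.toLp 2 ![a, b] := by
  ext i
  fin_cases i <;> simp

namespace Elastica

noncomputable def halfPlaneCurve (x : ℝ) : ℂ := x - (1 + Real.cosh x) * I

noncomputable def diskCurve (x : ℝ) : ℂ := 2 / halfPlaneCurve x - I

theorem halfPlaneCurve_re (x : ℝ) : (halfPlaneCurve x).re = x := by
  simp [halfPlaneCurve]

theorem halfPlaneCurve_im (x : ℝ) : (halfPlaneCurve x).im = -(1 + Real.cosh x) := by
  simp [halfPlaneCurve]

theorem halfPlaneCurve_ne_zero (x : ℝ) : halfPlaneCurve x ≠ 0 := by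
  intro h
  have := congrArg Complex.im h
  rw [halfPlaneCurve_im, zero_im] at this
  linarith [Real.cosh_pos x]

theorem norm_halfPlaneCurve_sq (x : ℝ) :
    ‖halfPlaneCurve x‖ ^ 2 = x ^ 2 + (1 + Real.cosh x) ^ 2 := by
  rw [Complex.sq_norm, normSq_apply, halfPlaneCurve_re, halfPlaneCurve_im]
  ring

theorem hasDerivAt_halfPlaneCurve (x : ℝ) :
    HasDerivAt halfPlaneCurve (1 - Real.sinh x * I) x := by
  have h := (hasDerivAt_id x).ofReal_comp.sub
    (((Real.hasDerivAt_cosh x).const_add 1).ofReal_comp.mul_const I)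
  refine (h.congr_deriv (by simp)).congr_of_eventuallyEq (.of_forall fun y => ?_)
  simp [halfPlaneCurve]

theorem hasDerivAt_diskCurve (x : ℝ) :
    HasDerivAt diskCurve (2 * (-(1 - Real.sinh x * I) / halfPlaneCurve x ^ 2)) x := by
  have h := (((hasDerivAt_halfPlaneCurve x).inv (halfPlaneCurve_ne_zero x)).const_mul 2).sub_const I
  exact h.congr_of_eventuallyEq (.of_forall fun y => by simp [diskCurve, div_eq_mul_inv])

theorem norm_diskCurve_lt_one (x : ℝ) : ‖diskCurve x‖ < 1 :=
  norm_two_div_sub_I_lt_one (by rw [halfPlaneCurve_im]; linarith [Real.cosh_pos x])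

theorem norm_deriv_diskCurve (x : ℝ) :
    ‖deriv diskCurve x‖ = 2 * Real.cosh x / (x ^ 2 + (1 + Real.cosh x) ^ 2) := by
  rw [(hasDerivAt_diskCurve x).deriv, norm_mul, norm_div, norm_neg, norm_pow,
    norm_one_sub_sinh_mul_I, norm_halfPlaneCurve_sq, Complex.norm_two, mul_div_assoc]

theorem integrable_norm_deriv_diskCurve : Integrable fun x => ‖deriv diskCurve x‖ := by
  refine (integrable_inv_one_add_sq.const_mul 8).mono'
    (measurable_deriv diskCurve).norm.aestronglyMeasurable (.of_forall fun x => ?_)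
  rw [norm_norm, norm_deriv_diskCurve, ← div_eq_mul_inv,
    div_le_div_iff₀ (by positivity) (by positivity)]
  nlinarith [Real.sq_le_four_mul_cosh x, Real.one_le_cosh x]

theorem repr_diskCurve (x : ℝ) : orthonormalBasisOneI.repr (diskCurve x) =
    (1 + x ^ 2 + Real.cosh x * (2 + Real.cosh x))⁻¹ •
      (WithLp.toLp 2 ![2 * x, 1 - x ^ 2 - Real.cosh x ^ 2] : EuclideanSpace ℝ (Fin 2)) := by
  rw [diskCurve, halfPlaneCurve, two_div_sub_I_eq x _ (by positivity), map_smul,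
    orthonormalBasisOneI_repr_add_mul_I]

end Elastica

/-- The explicit asymptotically geodesic elastica in the Poincaré disk stays in the open
unit disk and has finite Euclidean length. -/
theorem asymptotically_geodesic_elastica_in_disk_finite_length
    (γ : ℝ → EuclideanSpace ℝ (Fin 2))
    (hγ : ∀ x, γ x = (1 + x ^ 2 + Real.cosh x * (2 + Real.cosh x))⁻¹ •
        (WithLp.toLp 2 ![2 * x, 1 - x ^ 2 - (Real.cosh x) ^ 2] : EuclideanSpace ℝ (Fin 2))) :
    (∀ x, ‖γ x‖ < 1) ∧ MeasureTheory.Integrable (fun x => ‖deriv γ x‖) := by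
  obtain rfl : γ = orthonormalBasisOneI.repr ∘ Elastica.diskCurve :=
    funext fun x => (hγ x).trans (Elastica.repr_diskCurve x).symm
  refine ⟨fun x => ?_, ?_⟩
  · simpa using Elastica.norm_diskCurve_lt_one x
  · simpa only [LinearIsometryEquiv.norm_deriv_comp] using
      Elastica.integrable_norm_deriv_diskCurve
end

section
/- Let u(x) = (x, cosh x)/(x² + cosh² x) for x ∈ ℝ, and v(x) = h(cos x + 1, sin x) for x ∈ (0,π) and some h > 0. Then the only solution of u(x_u) = v(x_v) with x_u ∈ ℝ, x_v ∈ (0,π) is x_u = 1/(2h), x_v = 2 arctan(2h cosh(1/(2h))); moreover at this intersection the tangent vectors are linearly independent: det(u'(x_u) | v'(x_v)) = −4h³ / (2h² + 2h² cosh(1/h) + 1) ≠ 0. -/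
/-!
Inversion `p ↦ p / ‖p‖²` maps the catenary `(x, cosh x)` onto the elastica `u`, and the circle
`a² + b² = 2ha` (traced by `v`) onto the vertical line `a = 1 / (2h)`, which the catenary crosses
exactly once. The point `h (1 + cos θ, sin θ)` of the circle lies on the ray of angle `θ / 2`, so
`θ` is recovered from the slope of the intersection point by the half-angle formula
`tan (θ / 2) = sin θ / (1 + cos θ)`. The determinant is then a direct computation.
-/

open Real Set

namespace Real

theorem cos_two_mul_arctan (r : ℝ) : cos (2 * arctan r) = (1 - r ^ 2) / (1 + r ^ 2) := by
  have hr : 0 < 1 + r ^ 2 := by positivity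
  rw [cos_two_mul, cos_arctan, div_pow, sq_sqrt hr.le]
  field_simp
  ring

theorem sin_two_mul_arctan (r : ℝ) : sin (2 * arctan r) = 2 * r / (1 + r ^ 2) := by
  have hr : 0 < 1 + r ^ 2 := by positivity
  rw [sin_two_mul, sin_arctan, cos_arctan, mul_assoc, div_mul_div_comm,
    mul_self_sqrt hr.le]
  ring

theorem two_mul_arctan_sin_div_one_add_cos {θ : ℝ} (hθ : θ ∈ Ioo (-π) π) :
    2 * arctan (sin θ / (1 + cos θ)) = θ := by
  obtain ⟨φ, rfl⟩ : ∃ φ, θ = 2 * φ := ⟨θ / 2, by ring⟩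
  have hφ₁ : -(π / 2) < φ := by linarith [hθ.1]
  have hφ₂ : φ < π / 2 := by linarith [hθ.2]
  have hcos : cos φ ≠ 0 := (cos_pos_of_mem_Ioo ⟨hφ₁, hφ₂⟩).ne'
  have htan : sin (2 * φ) / (1 + cos (2 * φ)) = tan φ := by
    rw [sin_two_mul, cos_two_mul, tan_eq_sin_div_cos]
    field_simp
    ring
  rw [htan, arctan_tan hφ₁ hφ₂]

end Real

theorem circle_param_eq_iff {h a b θ : ℝ} (hh : h ≠ 0) (ha : a ≠ 0)
    (hab : a ^ 2 + b ^ 2 = 2 * h * a) (hθ : θ ∈ Ioo (-π) π) :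
    (h * (cos θ + 1) = a ∧ h * sin θ = b) ↔ θ = 2 * arctan (b / a) := by
  constructor
  · rintro ⟨rfl, rfl⟩
    rw [mul_div_mul_left _ _ hh, add_comm, two_mul_arctan_sin_div_one_add_cos hθ]
  · rintro rfl
    have hsum : 1 + (b / a) ^ 2 = 2 * h / a := by
      field_simp
      linarith
    rw [cos_two_mul_arctan, sin_two_mul_arctan, hsum]
    refine ⟨?_, by field_simp⟩
    field_simp
    linear_combination -hab

theorem inversion_mem_circle_iff {h x y : ℝ} (hxy : x ^ 2 + y ^ 2 ≠ 0) :
    (x / (x ^ 2 + y ^ 2)) ^ 2 + (y / (x ^ 2 + y ^ 2)) ^ 2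
      = 2 * h * (x / (x ^ 2 + y ^ 2)) ↔ 2 * h * x = 1 := by
  have hnorm : (x / (x ^ 2 + y ^ 2)) ^ 2 + (y / (x ^ 2 + y ^ 2)) ^ 2 = 1 / (x ^ 2 + y ^ 2) := by
    field_simp
  rw [hnorm, mul_div_assoc', div_left_inj' hxy, eq_comm]

theorem circle_param_mem_circle (h θ : ℝ) :
    (h * (cos θ + 1)) ^ 2 + (h * sin θ) ^ 2 = 2 * h * (h * (cos θ + 1)) := by
  linear_combination h ^ 2 * sin_sq_add_cos_sq θ

theorem hasDerivAt_sq_add_cosh_sq (x : ℝ) :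
    HasDerivAt (fun x => x ^ 2 + cosh x ^ 2) (2 * x + 2 * cosh x * sinh x) x := by
  simpa using (hasDerivAt_pow 2 x).fun_add ((hasDerivAt_cosh x).fun_pow 2)

theorem deriv_div_sq_add_cosh_sq (x : ℝ) :
    deriv (fun x => x / (x ^ 2 + cosh x ^ 2)) x
      = (x ^ 2 + cosh x ^ 2 - x * (2 * x + 2 * cosh x * sinh x)) / (x ^ 2 + cosh x ^ 2) ^ 2 := by
  simpa using ((hasDerivAt_id x).fun_div (hasDerivAt_sq_add_cosh_sq x) (by positivity)).deriv

theorem deriv_cosh_div_sq_add_cosh_sq (x : ℝ) :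
    deriv (fun x => cosh x / (x ^ 2 + cosh x ^ 2)) x
      = (sinh x * (x ^ 2 + cosh x ^ 2) - cosh x * (2 * x + 2 * cosh x * sinh x))
        / (x ^ 2 + cosh x ^ 2) ^ 2 :=
  ((hasDerivAt_cosh x).fun_div (hasDerivAt_sq_add_cosh_sq x) (by positivity)).deriv

/-- The asymptotically geodesic elastica u and the half-circle geodesic v intersect in
exactly one point, and there transversally. -/
theorem elastica_geodesic_unique_transversal_intersection (h : ℝ) (hh : 0 < h) :
    let u1 : ℝ → ℝ := fun x => x / (x ^ 2 + Real.cosh x ^ 2)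
    let u2 : ℝ → ℝ := fun x => Real.cosh x / (x ^ 2 + Real.cosh x ^ 2)
    let v1 : ℝ → ℝ := fun x => h * (Real.cos x + 1)
    let v2 : ℝ → ℝ := fun x => h * Real.sin x
    let xu₀ : ℝ := 1 / (2 * h)
    let xv₀ : ℝ := 2 * Real.arctan (2 * h * Real.cosh (1 / (2 * h)))
    (∀ xu : ℝ, ∀ xv ∈ Set.Ioo 0 Real.pi,
      (u1 xu = v1 xv ∧ u2 xu = v2 xv) ↔ (xu = xu₀ ∧ xv = xv₀)) ∧
    (deriv u1 xu₀ * deriv v2 xv₀ - deriv u2 xu₀ * deriv v1 xv₀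
      = -(4 * h ^ 3) / (2 * h ^ 2 + 2 * h ^ 2 * Real.cosh (1 / h) + 1)) ∧
    -(4 * h ^ 3) / (2 * h ^ 2 + 2 * h ^ 2 * Real.cosh (1 / h) + 1) ≠ 0 := by
  intro u1 u2 v1 v2 xu₀ xv₀
  have h2 : 2 * h ≠ 0 := by positivity
  have hu_circle (x : ℝ) : u1 x ^ 2 + u2 x ^ 2 = 2 * h * u1 x ↔ x = xu₀ :=
    (inversion_mem_circle_iff (by positivity)).trans
      ⟨eq_one_div_of_mul_eq_one_right, fun hx => hx ▸ mul_one_div_cancel h2⟩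
  have hv_eq {θ : ℝ} (hθ : θ ∈ Ioo 0 π) : (v1 θ = u1 xu₀ ∧ v2 θ = u2 xu₀) ↔ θ = xv₀ := by
    have hslope : u2 xu₀ / u1 xu₀ = 2 * h * cosh xu₀ := by
      simp only [u1, u2, xu₀]
      field_simp
    rw [circle_param_eq_iff hh.ne' (by positivity) ((hu_circle _).2 rfl)
      ⟨by linarith [pi_pos, hθ.1], hθ.2⟩, hslope]
  refine ⟨fun xu xv hxv => ⟨fun ⟨e1, e2⟩ => ?_, ?_⟩, ?_, ?_⟩
  · have hxu : xu = xu₀ := (hu_circle xu).1 (by rw [e1, e2]; exact circle_param_mem_circle h xv)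
    subst hxu
    exact ⟨rfl, (hv_eq hxv).1 ⟨e1.symm, e2.symm⟩⟩
  · rintro ⟨rfl, rfl⟩
    obtain ⟨e1, e2⟩ := (hv_eq hxv).2 rfl
    exact ⟨e1.symm, e2.symm⟩
  · have hv1 : deriv v1 xv₀ = -(h * sin xv₀) := by simp [v1]
    have hv2 : deriv v2 xv₀ = h * cos xv₀ := by simp [v2]
    have hden : 2 * h ^ 2 + 2 * h ^ 2 * cosh (1 / h) + 1 = 1 + (2 * h * cosh xu₀) ^ 2 := by
      rw [show 1 / h = 2 * xu₀ by simp only [xu₀]; field_simp, cosh_two_mul, sinh_sq]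
      ring
    rw [deriv_div_sq_add_cosh_sq, deriv_cosh_div_sq_add_cosh_sq, hv1, hv2, cos_two_mul_arctan,
      sin_two_mul_arctan, hden]
    simp only [xu₀]
    field_simp
    ring
  · exact div_ne_zero (neg_ne_zero.2 (by positivity)) (by positivity)
end

section
/- Let u : [−1,1] → ℍ² be a smooth immersion with u(−1) = u(1) = p and unit hyperbolic tangents T_± = ∂_s u(±1) satisfying T_− ≠ T_+. Set η = |T_− − T_+|_g. Then η ≤ η/2 + (ℰ(u)/(2η) + 1) L_{ℍ²}(u); in particular L_{ℍ²}(u) > 0 is bounded below in terms of η and ℰ(u), i.e. L_{ℍ²}(u) ≥ η²/(ℰ(u) + 2η). -/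
/-- Core analytic estimate: testing FTC with φ = ⟨v, u'/|u'|⟩. -/
lemma aux_core (u1 u2 : ℝ → ℝ) (h1 : ContDiff ℝ (⊤ : ℕ∞) u1) (h2 : ContDiff ℝ (⊤ : ℕ∞) u2)
    (hpos : ∀ x ∈ Set.Icc (-1 : ℝ) 1, 0 < u2 x)
    (himm : ∀ x ∈ Set.Icc (-1 : ℝ) 1, 0 < hypSpeed u1 u2 x)
    (v1 v2 : ℝ) (hv : v1 ^ 2 + v2 ^ 2 = 1) (a : ℝ) (ha : 0 < a) :
    (v1 * deriv u1 (-1) + v2 * deriv u2 (-1)) / hypSpeed u1 u2 (-1)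
      - (v1 * deriv u1 1 + v2 * deriv u2 1) / hypSpeed u1 u2 1
    ≤ (1 / (2 * a)) * (∫ x in (-1 : ℝ)..1, (hypCurv u1 u2 x) ^ 2 * hypSpeed u1 u2 x / u2 x)
      + (a / 2 + 1) * (∫ x in (-1 : ℝ)..1, hypSpeed u1 u2 x / u2 x) := by
  have hd1 := (contDiff_infty_iff_deriv.mp (h1.of_le (by simp))).2
  have hd2 := (contDiff_infty_iff_deriv.mp (h2.of_le (by simp))).2
  have hcf1 : Continuous (deriv u1) := hd1.continuous
  have hcf2 : Continuous (deriv u2) := hd2.continuous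
  have hcg1 : Continuous (deriv (deriv u1)) := hd1.continuous_deriv (by exact_mod_cast le_top)
  have hcg2 : Continuous (deriv (deriv u2)) := hd2.continuous_deriv (by exact_mod_cast le_top)
  have hcu2 : Continuous u2 := h2.continuous
  have hcs : Continuous (hypSpeed u1 u2) := by
    unfold hypSpeed
    exact Real.continuous_sqrt.comp ((hcf1.pow 2).add (hcf2.pow 2))
  have hIcc : Set.uIcc (-1 : ℝ) 1 = Set.Icc (-1 : ℝ) 1 := Set.uIcc_of_le (by norm_num)
  have hsne : ∀ x ∈ Set.Icc (-1:ℝ) 1, hypSpeed u1 u2 x ≠ 0 := fun x hx => (himm x hx).ne'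
  have hu2ne : ∀ x ∈ Set.Icc (-1:ℝ) 1, u2 x ≠ 0 := fun x hx => (hpos x hx).ne'
  -- derivatives
  have hDf1 : ∀ x : ℝ, HasDerivAt (deriv u1) (deriv (deriv u1) x) x :=
    fun x => (hd1.differentiable (by simp) x).hasDerivAt
  have hDf2 : ∀ x : ℝ, HasDerivAt (deriv u2) (deriv (deriv u2) x) x :=
    fun x => (hd2.differentiable (by simp) x).hasDerivAt
  set φ : ℝ → ℝ := fun x => (v1 * deriv u1 x + v2 * deriv u2 x) / hypSpeed u1 u2 x with hφ
  set F : ℝ → ℝ := fun x =>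
    (v1 * deriv u2 x - v2 * deriv u1 x)
      * (deriv (deriv u1) x * deriv u2 x - deriv (deriv u2) x * deriv u1 x)
      / (hypSpeed u1 u2 x) ^ 3 with hF
  have hDφ : ∀ x ∈ Set.Icc (-1:ℝ) 1, HasDerivAt φ (F x) x := by
    intro x hx
    have hsx : 0 < hypSpeed u1 u2 x := himm x hx
    have hq0 : (deriv u1 x) ^ 2 + (deriv u2 x) ^ 2 ≠ 0 := by
      intro h
      have : hypSpeed u1 u2 x = 0 := by unfold hypSpeed; rw [h, Real.sqrt_zero]
      exact hsx.ne' this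
    have hq : HasDerivAt (fun y => (deriv u1 y) ^ 2 + (deriv u2 y) ^ 2)
        (2 * deriv u1 x * deriv (deriv u1) x + 2 * deriv u2 x * deriv (deriv u2) x) x := by
      have := ((hDf1 x).pow 2).add ((hDf2 x).pow 2)
      refine this.congr_deriv ?_
      push_cast; ring
    have hDs : HasDerivAt (hypSpeed u1 u2)
        (1 / (2 * Real.sqrt ((deriv u1 x) ^ 2 + (deriv u2 x) ^ 2))
          * (2 * deriv u1 x * deriv (deriv u1) x + 2 * deriv u2 x * deriv (deriv u2) x)) x := by
      have := (Real.hasDerivAt_sqrt hq0).comp x hq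
      exact this
    have hnum : HasDerivAt (fun y => v1 * deriv u1 y + v2 * deriv u2 y)
        (v1 * deriv (deriv u1) x + v2 * deriv (deriv u2) x) x :=
      ((hDf1 x).const_mul v1).add ((hDf2 x).const_mul v2)
    have hdiv := hnum.div hDs hsx.ne'
    refine HasDerivAt.congr_deriv hdiv (Eq.symm ?_)
    have hs2 : (hypSpeed u1 u2 x) ^ 2 = (deriv u1 x) ^ 2 + (deriv u2 x) ^ 2 := by
      unfold hypSpeed; rw [Real.sq_sqrt (by positivity)]
    have hsqrt_eq : Real.sqrt ((deriv u1 x) ^ 2 + (deriv u2 x) ^ 2) = hypSpeed u1 u2 x := rfl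
    rw [hF]
    simp only
    rw [hsqrt_eq]
    field_simp
    linear_combination (-(v1 * deriv (deriv u1) x + v2 * deriv (deriv u2) x)) * hs2
  -- continuity / integrability
  have hFcont : ContinuousOn F (Set.Icc (-1:ℝ) 1) := by
    apply ContinuousOn.div
    · exact (((continuous_const.mul hcf2).sub (continuous_const.mul hcf1)).mul
        ((hcg1.mul hcf2).sub (hcg2.mul hcf1))).continuousOn
    · exact (hcs.pow 3).continuousOn
    · exact fun x hx => pow_ne_zero 3 (hsne x hx)
  have hFint : IntervalIntegrable F MeasureTheory.volume (-1) 1 :=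
    (hIcc ▸ hFcont).intervalIntegrable
  have hFTC : ∫ x in (-1:ℝ)..1, F x = φ 1 - φ (-1) :=
    intervalIntegral.integral_eq_sub_of_hasDerivAt (fun x hx => hDφ x (hIcc ▸ hx)) hFint
  have hκcont : ContinuousOn (hypCurv u1 u2) (Set.Icc (-1:ℝ) 1) := by
    apply ContinuousOn.div
    · exact ((((hcg2.mul hcf1).mul hcu2).sub ((hcg1.mul hcf2).mul hcu2)).add
        (hcf1.mul (hcs.pow 2))).continuousOn
    · exact (hcs.pow 3).continuousOn
    · exact fun x hx => pow_ne_zero 3 (hsne x hx)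
  have hEcont : ContinuousOn (fun x => (hypCurv u1 u2 x)^2 * hypSpeed u1 u2 x / u2 x)
      (Set.Icc (-1:ℝ) 1) := ((hκcont.pow 2).mul hcs.continuousOn).div hcu2.continuousOn hu2ne
  have hLcont : ContinuousOn (fun x => hypSpeed u1 u2 x / u2 x) (Set.Icc (-1:ℝ) 1) :=
    hcs.continuousOn.div hcu2.continuousOn hu2ne
  have hEint : IntervalIntegrable (fun x => (hypCurv u1 u2 x)^2 * hypSpeed u1 u2 x / u2 x)
      MeasureTheory.volume (-1) 1 := (hIcc ▸ hEcont).intervalIntegrable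
  have hLint : IntervalIntegrable (fun x => hypSpeed u1 u2 x / u2 x)
      MeasureTheory.volume (-1) 1 := (hIcc ▸ hLcont).intervalIntegrable
  set B : ℝ → ℝ := fun x => (1/(2*a)) * ((hypCurv u1 u2 x)^2 * hypSpeed u1 u2 x / u2 x)
      + (a/2+1) * (hypSpeed u1 u2 x / u2 x) with hB
  have hBint : IntervalIntegrable B MeasureTheory.volume (-1) 1 :=
    (hEint.const_mul _).add (hLint.const_mul _)
  -- pointwise bound |F| ≤ B on Icc
  have hbound : ∀ x ∈ Set.Icc (-1:ℝ) 1, |F x| ≤ B x := by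
    intro x hx
    have hsx : 0 < hypSpeed u1 u2 x := himm x hx
    have hp : 0 < u2 x := hpos x hx
    have hs2 : (hypSpeed u1 u2 x)^2 = (deriv u1 x)^2 + (deriv u2 x)^2 := by
      unfold hypSpeed; rw [Real.sq_sqrt (by positivity)]
    have hA : |v1 * deriv u2 x - v2 * deriv u1 x| ≤ hypSpeed u1 u2 x := by
      have key : (v1 * deriv u2 x - v2 * deriv u1 x)^2 + (v1 * deriv u1 x + v2 * deriv u2 x)^2
          = (v1^2+v2^2) * ((deriv u1 x)^2 + (deriv u2 x)^2) := by ring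
      rw [hv, one_mul] at key
      have hsq : (v1 * deriv u2 x - v2 * deriv u1 x)^2 ≤ (hypSpeed u1 u2 x)^2 := by
        rw [hs2]; nlinarith [sq_nonneg (v1 * deriv u1 x + v2 * deriv u2 x)]
      have := Real.sqrt_le_sqrt hsq
      rwa [Real.sqrt_sq_eq_abs, Real.sqrt_sq hsx.le] at this
    have hd1le : |deriv u1 x| ≤ hypSpeed u1 u2 x := by
      have hsq : (deriv u1 x)^2 ≤ (hypSpeed u1 u2 x)^2 := by
        rw [hs2]; nlinarith [sq_nonneg (deriv u2 x)]
      have := Real.sqrt_le_sqrt hsq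
      rwa [Real.sqrt_sq_eq_abs, Real.sqrt_sq hsx.le] at this
    have hkk : hypCurv u1 u2 x * hypSpeed u1 u2 x ^3
        = deriv (deriv u2) x * deriv u1 x * u2 x - deriv (deriv u1) x * deriv u2 x * u2 x
          + deriv u1 x * hypSpeed u1 u2 x ^2 := by
      unfold hypCurv; rw [div_mul_cancel₀ _ (pow_ne_zero 3 hsx.ne')]
    have hG : |deriv (deriv u1) x * deriv u2 x - deriv (deriv u2) x * deriv u1 x| * u2 x
        ≤ (|hypCurv u1 u2 x| * hypSpeed u1 u2 x + hypSpeed u1 u2 x) * hypSpeed u1 u2 x ^2 := by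
      have e : (deriv (deriv u1) x * deriv u2 x - deriv (deriv u2) x * deriv u1 x) * u2 x
          = deriv u1 x * hypSpeed u1 u2 x ^2 - hypCurv u1 u2 x * hypSpeed u1 u2 x ^3 := by
        linarith [hkk]
      calc |deriv (deriv u1) x * deriv u2 x - deriv (deriv u2) x * deriv u1 x| * u2 x
          = |(deriv (deriv u1) x * deriv u2 x - deriv (deriv u2) x * deriv u1 x) * u2 x| := by
            rw [abs_mul, abs_of_pos hp]
        _ = |deriv u1 x * hypSpeed u1 u2 x ^2 - hypCurv u1 u2 x * hypSpeed u1 u2 x ^3| := by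
            rw [e]
        _ ≤ |deriv u1 x * hypSpeed u1 u2 x ^2| + |hypCurv u1 u2 x * hypSpeed u1 u2 x ^3| :=
            abs_sub _ _
        _ = |deriv u1 x| * hypSpeed u1 u2 x^2 + |hypCurv u1 u2 x| * hypSpeed u1 u2 x^3 := by
            rw [abs_mul, abs_mul, abs_of_pos (pow_pos hsx 2), abs_of_pos (pow_pos hsx 3)]
        _ ≤ hypSpeed u1 u2 x * hypSpeed u1 u2 x^2 + |hypCurv u1 u2 x| * hypSpeed u1 u2 x^3 := by
            have := mul_le_mul_of_nonneg_right hd1le (le_of_lt (pow_pos hsx 2)); linarith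
        _ = (|hypCurv u1 u2 x| * hypSpeed u1 u2 x + hypSpeed u1 u2 x) * hypSpeed u1 u2 x^2 := by
            ring
    have hFb : |F x| ≤ (|hypCurv u1 u2 x| + 1) * (hypSpeed u1 u2 x / u2 x) := by
      rw [hF]
      simp only
      rw [abs_div, abs_mul, abs_of_pos (pow_pos hsx 3),
        show (|hypCurv u1 u2 x| + 1) * (hypSpeed u1 u2 x / u2 x)
          = ((|hypCurv u1 u2 x| + 1) * hypSpeed u1 u2 x) / u2 x from by ring,
        div_le_div_iff₀ (pow_pos hsx 3) hp]
      calc |v1 * deriv u2 x - v2 * deriv u1 x|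
            * |deriv (deriv u1) x * deriv u2 x - deriv (deriv u2) x * deriv u1 x| * u2 x
          = |v1 * deriv u2 x - v2 * deriv u1 x|
            * (|deriv (deriv u1) x * deriv u2 x - deriv (deriv u2) x * deriv u1 x| * u2 x) := by
            ring
        _ ≤ hypSpeed u1 u2 x
            * ((|hypCurv u1 u2 x| * hypSpeed u1 u2 x + hypSpeed u1 u2 x) * hypSpeed u1 u2 x^2) :=
            mul_le_mul hA hG (mul_nonneg (abs_nonneg _) hp.le) hsx.le
        _ = (|hypCurv u1 u2 x| + 1) * hypSpeed u1 u2 x * hypSpeed u1 u2 x ^3 := by ring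
    have h2a : (0:ℝ) < 2*a := by linarith
    have hY : |hypCurv u1 u2 x| ≤ (hypCurv u1 u2 x)^2/(2*a) + a/2 := by
      have key : (hypCurv u1 u2 x)^2/(2*a) + a/2 - |hypCurv u1 u2 x|
          = (|hypCurv u1 u2 x| - a)^2/(2*a) := by
        field_simp
        linear_combination (-1:ℝ) * sq_abs (hypCurv u1 u2 x)
      have := div_nonneg (sq_nonneg (|hypCurv u1 u2 x| - a)) h2a.le
      linarith [key]
    calc |F x| ≤ (|hypCurv u1 u2 x| + 1) * (hypSpeed u1 u2 x / u2 x) := hFb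
      _ ≤ ((hypCurv u1 u2 x)^2/(2*a) + a/2 + 1) * (hypSpeed u1 u2 x / u2 x) := by
          apply mul_le_mul_of_nonneg_right _ (div_nonneg hsx.le hp.le)
          linarith [hY]
      _ = B x := by rw [hB]; ring
  -- put it together
  have habs : |∫ x in (-1:ℝ)..1, F x| ≤ ∫ x in (-1:ℝ)..1, |F x| :=
    intervalIntegral.abs_integral_le_integral_abs (by norm_num)
  have hmono : (∫ x in (-1:ℝ)..1, |F x|) ≤ ∫ x in (-1:ℝ)..1, B x :=
    intervalIntegral.integral_mono_on (by norm_num) hFint.abs hBint hbound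
  have hBval : (∫ x in (-1:ℝ)..1, B x)
      = (1/(2*a)) * (∫ x in (-1:ℝ)..1, (hypCurv u1 u2 x)^2 * hypSpeed u1 u2 x / u2 x)
        + (a/2+1) * (∫ x in (-1:ℝ)..1, hypSpeed u1 u2 x / u2 x) := by
    rw [hB, intervalIntegral.integral_add (hEint.const_mul _) (hLint.const_mul _),
      intervalIntegral.integral_const_mul, intervalIntegral.integral_const_mul]
  have hLHS : (v1 * deriv u1 (-1) + v2 * deriv u2 (-1)) / hypSpeed u1 u2 (-1)
      - (v1 * deriv u1 1 + v2 * deriv u2 1) / hypSpeed u1 u2 1 = φ (-1) - φ 1 := rfl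
  rw [hLHS]
  have step : φ (-1) - φ 1 ≤ ∫ x in (-1:ℝ)..1, B x := by
    have e : φ (-1) - φ 1 = -(∫ x in (-1:ℝ)..1, F x) := by rw [hFTC]; ring
    calc φ (-1) - φ 1 = -(∫ x in (-1:ℝ)..1, F x) := e
      _ ≤ |∫ x in (-1:ℝ)..1, F x| := neg_le_abs _
      _ ≤ ∫ x in (-1:ℝ)..1, |F x| := habs
      _ ≤ ∫ x in (-1:ℝ)..1, B x := hmono
  linarith [step, hBval.le, hBval.ge]

/-- Lower bound on the hyperbolic length of a smooth loop u : [−1,1] → ℍ² with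
u(−1) = u(1) but distinct unit hyperbolic tangents: with
η = |∂ₛu(−1) − ∂ₛu(1)|_g one has η ≤ η/2 + (ℰ(u)/(2η) + 1)·L and
L ≥ η²/(ℰ(u) + 2η). -/
theorem length_lower_bound_distinct_tangents
    (u1 u2 : ℝ → ℝ) (h1 : ContDiff ℝ (⊤ : ℕ∞) u1) (h2 : ContDiff ℝ (⊤ : ℕ∞) u2)
    (hpos : ∀ x ∈ Set.Icc (-1 : ℝ) 1, 0 < u2 x)
    (himm : ∀ x ∈ Set.Icc (-1 : ℝ) 1, 0 < hypSpeed u1 u2 x)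
    (hp1 : u1 (-1) = u1 1) (hp2 : u2 (-1) = u2 1) :
    -- unit hyperbolic tangent vector ∂ₛu = (u₂/|∂ₓu|)·∂ₓu
    let T1 : ℝ → ℝ := fun x => u2 x * deriv u1 x / hypSpeed u1 u2 x
    let T2 : ℝ → ℝ := fun x => u2 x * deriv u2 x / hypSpeed u1 u2 x
    let η : ℝ := Real.sqrt ((T1 (-1) - T1 1) ^ 2 + (T2 (-1) - T2 1) ^ 2) / u2 1
    let E : ℝ := ∫ x in (-1 : ℝ)..1, (hypCurv u1 u2 x) ^ 2 * hypSpeed u1 u2 x / u2 x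
    let L : ℝ := ∫ x in (-1 : ℝ)..1, hypSpeed u1 u2 x / u2 x
    (T1 (-1), T2 (-1)) ≠ (T1 1, T2 1) →
      η ≤ η / 2 + (E / (2 * η) + 1) * L ∧ η ^ 2 / (E + 2 * η) ≤ L := by
  intro T1 T2 η E L hne
  have hIcc : Set.uIcc (-1:ℝ) 1 = Set.Icc (-1:ℝ) 1 := Set.uIcc_of_le (by norm_num)
  have hm1 : (-1:ℝ) ∈ Set.Icc (-1:ℝ) 1 := by norm_num
  have hp1m : (1:ℝ) ∈ Set.Icc (-1:ℝ) 1 := by norm_num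
  have hu21 : 0 < u2 1 := hpos 1 hp1m
  have hsm : 0 < hypSpeed u1 u2 (-1) := himm (-1) hm1
  have hsp : 0 < hypSpeed u1 u2 1 := himm 1 hp1m
  set A1 : ℝ := deriv u1 (-1) / hypSpeed u1 u2 (-1) - deriv u1 1 / hypSpeed u1 u2 1 with hA1
  set A2 : ℝ := deriv u2 (-1) / hypSpeed u1 u2 (-1) - deriv u2 1 / hypSpeed u1 u2 1 with hA2
  set m : ℝ := Real.sqrt (A1^2 + A2^2) with hm
  have hT1 : T1 (-1) - T1 1 = u2 1 * A1 := by
    simp only [T1, hA1]; rw [hp2]; ring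
  have hT2 : T2 (-1) - T2 1 = u2 1 * A2 := by
    simp only [T2, hA2]; rw [hp2]; ring
  have hηm : η = m := by
    simp only [η]
    rw [hT1, hT2, show (u2 1 * A1)^2 + (u2 1*A2)^2 = (u2 1)^2 * (A1^2+A2^2) from by ring,
      Real.sqrt_mul (sq_nonneg _), Real.sqrt_sq hu21.le, ← hm, mul_div_cancel_left₀ _ hu21.ne']
  have hηpos : 0 < η := by
    have hTne : T1 (-1) ≠ T1 1 ∨ T2 (-1) ≠ T2 1 := by
      by_contra h; push_neg at h; exact hne (by rw [h.1, h.2])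
    have hsq : 0 < (T1 (-1) - T1 1)^2 + (T2 (-1) - T2 1)^2 := by
      rcases hTne with h | h
      · have := sub_ne_zero.mpr h; positivity
      · have := sub_ne_zero.mpr h; positivity
    exact div_pos (Real.sqrt_pos.mpr hsq) hu21
  have hmpos : 0 < m := hηm ▸ hηpos
  have hm2 : m^2 = A1^2 + A2^2 := Real.sq_sqrt (by positivity)
  -- integrability of the length integrand, positivity of L, nonnegativity of E
  have hcu2 : Continuous u2 := h2.continuous
  have hd1 := (contDiff_infty_iff_deriv.mp (h1.of_le (by simp))).2
  have hd2 := (contDiff_infty_iff_deriv.mp (h2.of_le (by simp))).2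
  have hcs : Continuous (hypSpeed u1 u2) := by
    unfold hypSpeed
    exact Real.continuous_sqrt.comp ((hd1.continuous.pow 2).add (hd2.continuous.pow 2))
  have hu2ne : ∀ x ∈ Set.Icc (-1:ℝ) 1, u2 x ≠ 0 := fun x hx => (hpos x hx).ne'
  have hLint : IntervalIntegrable (fun x => hypSpeed u1 u2 x / u2 x)
      MeasureTheory.volume (-1) 1 :=
    (hIcc ▸ (hcs.continuousOn.div hcu2.continuousOn hu2ne)).intervalIntegrable
  have hLpos : 0 < L := by
    simp only [L]
    exact intervalIntegral.intervalIntegral_pos_of_pos_on hLint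
      (fun x hx => div_pos (himm x (Set.mem_Icc_of_Ioo hx)) (hpos x (Set.mem_Icc_of_Ioo hx)))
      (by norm_num)
  have hEnonneg : 0 ≤ E := by
    simp only [E]
    apply intervalIntegral.integral_nonneg (by norm_num)
    intro x hx
    exact div_nonneg (mul_nonneg (sq_nonneg _) (himm x hx).le) (hpos x hx).le
  -- apply the core estimate
  have hv : (A1/m)^2 + (A2/m)^2 = 1 := by
    field_simp
    linarith [hm2]
  have ha : 0 < m / L := div_pos hmpos hLpos
  have key := aux_core u1 u2 h1 h2 hpos himm (A1/m) (A2/m) hv (m/L) ha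
  have hLHS : (A1/m * deriv u1 (-1) + A2/m * deriv u2 (-1)) / hypSpeed u1 u2 (-1)
      - (A1/m * deriv u1 1 + A2/m * deriv u2 1) / hypSpeed u1 u2 1 = m := by
    have e : (A1/m * deriv u1 (-1) + A2/m * deriv u2 (-1)) / hypSpeed u1 u2 (-1)
        - (A1/m * deriv u1 1 + A2/m * deriv u2 1) / hypSpeed u1 u2 1 = (A1^2+A2^2)/m := by
      rw [hA1, hA2]
      field_simp
      ring
    rw [e, ← hm2, sq, mul_div_assoc, div_self hmpos.ne', mul_one]
  rw [hLHS] at key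
  have hEE : E = ∫ x in (-1:ℝ)..1, (hypCurv u1 u2 x)^2 * hypSpeed u1 u2 x / u2 x := rfl
  have hLL : L = ∫ x in (-1:ℝ)..1, hypSpeed u1 u2 x / u2 x := rfl
  rw [← hEE, ← hLL] at key
  have eq1 : 1/(2*(m/L)) * E + ((m/L)/2+1)*L = m/2 + (E/(2*m)+1)*L := by
    field_simp
    ring
  rw [eq1] at key
  constructor
  · rw [hηm]; exact key
  · rw [hηm, div_le_iff₀ (by linarith : (0:ℝ) < E + 2*m)]
    have e2 : (E/(2*m)+1)*L*(2*m) = E*L + 2*m*L := by field_simp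
    have e3 : m/2*(2*m) = m^2 := by ring
    have hstep : m/2*(2*m) ≤ (E/(2*m)+1)*L*(2*m) := by
      apply mul_le_mul_of_nonneg_right (by linarith) (by positivity)
    have e4 : E*L + 2*m*L = L*(E+2*m) := by ring
    linarith [hstep, e2, e3, e4]
end

section
/- Let u : [a,b] → ℍ² be a smooth immersion with u₂ > 0. Then the hyperbolic elastic energy ℰ(u) = ∫ κ² ds and the Willmore energy 𝒲(f_u) = ∫ H² dμ of the associated surface of revolution f_u satisfy (2/π) 𝒲(f_u) = ℰ(u) − 4[∂ₓu₂/|∂ₓu|]ₐᵇ, where [F]ₐᵇ = F(b) − F(a). -/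
/-- Algebraic core of the Bryant–Griffiths identity. -/
lemma bg_key_id (A B C D S T : ℝ) (hS : S ≠ 0) (hT : T ≠ 0) (h2 : A ^ 2 + B ^ 2 = S ^ 2) :
    4 * ((((D * A * T - C * B * T + A * S ^ 2) / S ^ 3) - 2 * A / S) / (2 * T)) ^ 2 * S * T
      = ((D * A * T - C * B * T + A * S ^ 2) / S ^ 3) ^ 2 * S / T
        - 4 * ((D * S - B * ((A * C + B * D) / S)) / S ^ 2) := by
  field_simp
  linear_combination (-16 * D * T * S ^ 2) * h2

/-- Bryant–Griffiths identity: (2/π)𝒲(f_u) = ℰ(u) − 4[∂ₓu₂/|∂ₓu|]ₐᵇ, where the Willmore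
energy of the surface of revolution f_u(x,φ) = (u₁, u₂cos φ, u₂ sin φ) is
𝒲 = ∫ H² dμ = 2π ∫ H² |∂ₓu| u₂ dx with mean curvature 2H = (κ − 2∂ₓu₁/|∂ₓu|)/u₂. -/
theorem bryant_griffiths_identity
    (a b : ℝ) (hab : a ≤ b) (u1 u2 : ℝ → ℝ)
    (h1 : ContDiff ℝ (⊤ : ℕ∞) u1) (h2 : ContDiff ℝ (⊤ : ℕ∞) u2)
    (hpos : ∀ x ∈ Set.Icc a b, 0 < u2 x)
    (himm : ∀ x ∈ Set.Icc a b, 0 < hypSpeed u1 u2 x) :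
    let sp := hypSpeed u1 u2
    let κ := hypCurv u1 u2
    let W : ℝ := 2 * Real.pi *
      ∫ x in a..b, ((κ x - 2 * deriv u1 x / sp x) / (2 * u2 x)) ^ 2 * sp x * u2 x
    (2 / Real.pi) * W =
      (∫ x in a..b, (κ x) ^ 2 * sp x / u2 x)
        - 4 * (deriv u2 b / sp b - deriv u2 a / sp a) := by
  intro sp κ W
  have hIcc : Set.uIcc a b = Set.Icc a b := Set.uIcc_of_le hab
  -- smoothness of derivatives
  have h1i : ContDiff ℝ (⊤ : ℕ∞) u1 := h1.of_le (by simp)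
  have h2i : ContDiff ℝ (⊤ : ℕ∞) u2 := h2.of_le (by simp)
  have h1d : ContDiff ℝ (⊤ : ℕ∞) (deriv u1) := (contDiff_infty_iff_deriv.mp h1i).2
  have h2d : ContDiff ℝ (⊤ : ℕ∞) (deriv u2) := (contDiff_infty_iff_deriv.mp h2i).2
  have hc1 : Continuous (deriv u1) := h1d.continuous
  have hc2 : Continuous (deriv u2) := h2d.continuous
  have hc1' : Continuous (deriv (deriv u1)) := (contDiff_infty_iff_deriv.mp h1d).2.continuous
  have hc2' : Continuous (deriv (deriv u2)) := (contDiff_infty_iff_deriv.mp h2d).2.continuous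
  have hcu2 : Continuous u2 := h2.continuous
  have hcsp : Continuous sp := Real.continuous_sqrt.comp ((hc1.pow 2).add (hc2.pow 2))
  have hspne : ∀ x ∈ Set.Icc a b, sp x ≠ 0 := fun x hx => ne_of_gt (himm x hx)
  have hu2ne : ∀ x ∈ Set.Icc a b, u2 x ≠ 0 := fun x hx => ne_of_gt (hpos x hx)
  -- the boundary term function and its derivative
  set G : ℝ → ℝ := fun x => (deriv (deriv u2) x * sp x
      - deriv u2 x * ((deriv u1 x * deriv (deriv u1) x + deriv u2 x * deriv (deriv u2) x) / sp x))
      / sp x ^ 2 with hGdef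
  have hder : ∀ x ∈ Set.uIcc a b, HasDerivAt (fun y => deriv u2 y / sp y) (G x) x := by
    intro x hx
    rw [hIcc] at hx
    have hsx : 0 < sp x := himm x hx
    have hsne : sp x ≠ 0 := ne_of_gt hsx
    have hDne : deriv u1 x ^ 2 + deriv u2 x ^ 2 ≠ 0 := by
      intro h
      have : sp x = 0 := by
        show Real.sqrt _ = 0
        rw [h, Real.sqrt_zero]
      exact hsne this
    have hD : HasDerivAt (fun y => deriv u1 y ^ 2 + deriv u2 y ^ 2)
        (2 * deriv u1 x ^ 1 * deriv (deriv u1) x + 2 * deriv u2 x ^ 1 * deriv (deriv u2) x) x :=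
      (((h1d.differentiable (by norm_num) x).hasDerivAt.pow 2).add
        ((h2d.differentiable (by norm_num) x).hasDerivAt.pow 2))
    have hsp : HasDerivAt sp
        ((deriv u1 x * deriv (deriv u1) x + deriv u2 x * deriv (deriv u2) x) / sp x) x := by
      have h := hD.sqrt hDne
      convert h using 1
      show _ = _ / (2 * sp x)
      field_simp
      ring
      rfl
    exact (h2d.differentiable (by norm_num) x).hasDerivAt.div hsp hsne
  -- pointwise identity
  have hkey : ∀ x ∈ Set.uIcc a b,
      4 * (((κ x - 2 * deriv u1 x / sp x) / (2 * u2 x)) ^ 2 * sp x * u2 x)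
        = κ x ^ 2 * sp x / u2 x - 4 * G x := by
    intro x hx
    rw [hIcc] at hx
    have hsne : sp x ≠ 0 := hspne x hx
    have hune : u2 x ≠ 0 := hu2ne x hx
    have hS2 : deriv u1 x ^ 2 + deriv u2 x ^ 2 = sp x ^ 2 :=
      (Real.sq_sqrt (by positivity)).symm
    have hκ : κ x = (deriv (deriv u2) x * deriv u1 x * u2 x
        - deriv (deriv u1) x * deriv u2 x * u2 x + deriv u1 x * sp x ^ 2) / sp x ^ 3 := rfl
    rw [hκ, hGdef]
    have := bg_key_id (deriv u1 x) (deriv u2 x) (deriv (deriv u1) x) (deriv (deriv u2) x)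
      (sp x) (u2 x) hsne hune hS2
    linarith [this]
  -- continuity / integrability
  have hcsOn : ContinuousOn sp (Set.Icc a b) := hcsp.continuousOn
  have hκcont : ContinuousOn κ (Set.Icc a b) := by
    apply ContinuousOn.div
    · exact (((hc2'.mul hc1).mul hcu2).sub ((hc1'.mul hc2).mul hcu2)).continuousOn.add
        (hc1.continuousOn.mul (hcsOn.pow 2))
    · exact hcsOn.pow 3
    · intro x hx
      exact pow_ne_zero 3 (hspne x hx)
  have hInt1 : IntervalIntegrable (fun x => κ x ^ 2 * sp x / u2 x) MeasureTheory.volume a b := by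
    apply ContinuousOn.intervalIntegrable
    rw [hIcc]
    exact ((hκcont.pow 2).mul hcsOn).div hcu2.continuousOn hu2ne
  have hGcont : ContinuousOn G (Set.Icc a b) := by
    apply ContinuousOn.div
    · exact (hc2'.continuousOn.mul hcsOn).sub (hc2.continuousOn.mul
        (((hc1.mul hc1').add (hc2.mul hc2')).continuousOn.div hcsOn hspne))
    · exact hcsOn.pow 2
    · intro x hx
      exact pow_ne_zero 2 (hspne x hx)
  have hIntG : IntervalIntegrable G MeasureTheory.volume a b := by
    apply ContinuousOn.intervalIntegrable
    rw [hIcc]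
    exact hGcont
  -- FTC
  have hFTC : ∫ x in a..b, G x = deriv u2 b / sp b - deriv u2 a / sp a :=
    intervalIntegral.integral_eq_sub_of_hasDerivAt hder hIntG
  -- put everything together
  have hπ : (Real.pi : ℝ) ≠ 0 := Real.pi_ne_zero
  have hW : (2 / Real.pi) * W
      = ∫ x in a..b, 4 * (((κ x - 2 * deriv u1 x / sp x) / (2 * u2 x)) ^ 2 * sp x * u2 x) := by
    rw [intervalIntegral.integral_const_mul]
    show (2 / Real.pi) * (2 * Real.pi * _) = _
    field_simp
    ring
  rw [hW, intervalIntegral.integral_congr hkey,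
    intervalIntegral.integral_sub hInt1 (hIntG.const_mul 4),
    intervalIntegral.integral_const_mul, hFTC]
end
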